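/- arXiv:1808.05293 — 5 statements merged into one kernel-verified Lean document; each statement's English description precedes it below -/
import Mathlib

section
/- Under no anticipation, invariance to history, constant treatment effect over units, and constant treatment effect over time, for all t and adoption dates a' < a: Y_{it}(a') - Y_{it}(a) = (indicator of a' ≤ t < a) · τ, where τ = Y_{i1}(1) - Y_{i1}(∞) is the same for all units i. -/
theorem stmt2 (N T : ℕ) (hT : 1 ≤ T) (Y : Fin N → ℕ → ℕ∞ → ℝ)
    (hna : ∀ i t a, 1 ≤ t → t ≤ T → (t : ℕ∞) < a → Y i t a = Y i t ⊤)
    (hinv : ∀ i t a, 1 ≤ t → t ≤ T → 1 ≤ a → a ≤ (t : ℕ∞) → Y i t a = Y i t 1)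
    (hunit : ∀ i j t a a', 1 ≤ t → t ≤ T →
      Y i t a - Y i t a' = Y j t a - Y j t a')
    (htime : ∀ i t t', 1 ≤ t → t ≤ T → 1 ≤ t' → t' ≤ T →
      Y i t 1 - Y i t ⊤ = Y i t' 1 - Y i t' ⊤) :
    (∀ i j, Y i 1 1 - Y i 1 ⊤ = Y j 1 1 - Y j 1 ⊤) ∧
    (∀ i t a a', 1 ≤ t → t ≤ T →
      (1 ≤ a' ∧ (a' ≤ (T : ℕ∞) ∨ a' = ⊤)) →
      (1 ≤ a ∧ (a ≤ (T : ℕ∞) ∨ a = ⊤)) →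
      a' < a →
      Y i t a' - Y i t a
        = (if a' ≤ (t : ℕ∞) ∧ (t : ℕ∞) < a then (1 : ℝ) else 0)
            * (Y i 1 1 - Y i 1 ⊤)) := by
  refine ⟨fun i j => hunit i j 1 1 ⊤ le_rfl hT, ?_⟩
  intro i t a a' ht1 htT ⟨ha'1, _⟩ _ hlt
  by_cases h1 : a' ≤ (t : ℕ∞)
  · by_cases h2 : (t : ℕ∞) < a
    · rw [if_pos ⟨h1, h2⟩, one_mul, hinv i t a' ht1 htT ha'1 h1,
        hna i t a ht1 htT h2]
      exact htime i t 1 ht1 htT le_rfl hT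
    · push_neg at h2
      rw [if_neg (fun h => absurd h.2 (not_lt.mpr h2)), zero_mul,
        hinv i t a' ht1 htT ha'1 h1,
        hinv i t a ht1 htT (le_trans ha'1 hlt.le) h2, sub_self]
  · push_neg at h1
    rw [if_neg (fun h => absurd h.1 (not_le.mpr h1)), zero_mul,
      hna i t a' ht1 htT h1, hna i t a ht1 htT (h1.trans hlt), sub_self]
end

section
/- τ̂_DID decomposes as Σ_t γ_{t,+} τ̂_{t,∞1} + Σ_t Σ_{a>t} γ_{t,a} τ̂_{t,∞a} − Σ_t Σ_{a≤t} γ_{t,a} τ̂_{t,a1}, where τ̂_{t,aa'} = Ȳ_{t,a'} − Ȳ_{t,a}, γ_{t,+} = Σ_{a≤t} γ_{t,a}. -/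
theorem stmt9 (T : ℕ) (𝔸 : Finset ℕ∞)
    (h𝔸 : 𝔸 = insert ⊤ ((Finset.Icc 1 T).image (fun s : ℕ => (s : ℕ∞))))
    (γ : ℕ → ℕ∞ → ℝ) (Ybar : ℕ → ℕ∞ → ℝ)
    (hrow : ∀ t ∈ Finset.Icc 1 T, ∑ a ∈ 𝔸, γ t a = 0)
    (τhat : ℕ → ℕ∞ → ℕ∞ → ℝ)
    (hτ : ∀ t a a', τhat t a a' = Ybar t a' - Ybar t a) :
    ∑ t ∈ Finset.Icc 1 T, ∑ a ∈ 𝔸, γ t a * Ybar t a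
      = (∑ t ∈ Finset.Icc 1 T,
          (∑ a ∈ 𝔸.filter (fun a => a ≤ (t : ℕ∞)), γ t a) * τhat t ⊤ 1)
        + (∑ t ∈ Finset.Icc 1 T, ∑ a ∈ 𝔸.filter (fun a => (t : ℕ∞) < a), γ t a * τhat t ⊤ a)
        - (∑ t ∈ Finset.Icc 1 T, ∑ a ∈ 𝔸.filter (fun a => a ≤ (t : ℕ∞)), γ t a * τhat t a 1) := by
  rw [← Finset.sum_add_distrib, ← Finset.sum_sub_distrib]
  refine Finset.sum_congr rfl fun t ht => ?_
  have hnot : 𝔸.filter (fun a => ¬ a ≤ (t:ℕ∞)) = 𝔸.filter (fun a => (t:ℕ∞) < a) := by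
    simp [not_le]
  have hsplit := Finset.sum_filter_add_sum_filter_not 𝔸 (fun a => a ≤ (t:ℕ∞))
      (fun a => γ t a * Ybar t a)
  have hsplitγ := Finset.sum_filter_add_sum_filter_not 𝔸 (fun a => a ≤ (t:ℕ∞)) (γ t)
  rw [hnot] at hsplit hsplitγ
  rw [hrow t ht] at hsplitγ
  rw [← hsplit]
  simp only [hτ, mul_sub]
  rw [Finset.sum_sub_distrib, Finset.sum_sub_distrib, ← Finset.sum_mul, ← Finset.sum_mul]
  linear_combination (Ybar t ⊤) * hsplitγ
end

section
/- Under completely random assignment and no anticipation (τ_{t,∞a} = 0 for a > t, and Y_{it}(a) = Y_{it}(∞) for a > t), the expectation of the DID estimator equals Σ_{t∈𝕋} Σ_{a≤t} γ_{t,a} τ_{t,∞a}, a weighted average of causal effects of already-adopted dates versus never adopting, with weights summing to one. -/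
/-- The fiber of `Sigma.fst` over `b` is equivalent to `F b`. -/
def stmtFiberEquiv {β : Type*} (F : β → Type*) (b : β) :
    {x : Σ c, F c // x.1 = b} ≃ F b where
  toFun x := cast (congrArg F x.2) x.1.2
  invFun y := ⟨⟨b, y⟩, rfl⟩
  left_inv := by rintro ⟨⟨c, y⟩, rfl⟩; rfl
  right_inv := by intro y; rfl

theorem stmt12 (N T : ℕ) (hN : 0 < N) (hT : 0 < T)
    (𝔸 : Finset ℕ∞)
    (h𝔸 : 𝔸 = insert ⊤ ((Finset.Icc 1 T).image (fun s : ℕ => (s : ℕ∞))))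
    (Na : ℕ∞ → ℕ) (hNa : ∀ a ∈ 𝔸, 0 < Na a) (hsum : ∑ a ∈ 𝔸, Na a = N)
    (Ω : Finset (Fin N → ℕ∞))
    (hΩ : ∀ A : Fin N → ℕ∞, A ∈ Ω ↔ ((∀ i, A i ∈ 𝔸) ∧
      ∀ a ∈ 𝔸, (Finset.univ.filter (fun i => A i = a)).card = Na a))
    (Y : Fin N → ℕ → ℕ∞ → ℝ)
    (hna : ∀ i t a, 1 ≤ t → t ≤ T → a ∈ 𝔸 → (t : ℕ∞) < a → Y i t a = Y i t ⊤)
    (π : ℕ∞ → ℝ) (hπ : ∀ a, π a = (Na a : ℝ) / N)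
    (g : ℕ → ℕ∞ → ℝ)
    (hg : ∀ t a, g t a =
      ((if a ≤ (t : ℕ∞) then (1 : ℝ) else 0) - ∑ s ∈ Finset.Icc 1 t, π (s : ℕ∞))
      + (1 / (T : ℝ)) * ((if a ≤ (T : ℕ∞) then (a.toNat : ℝ) else 0)
          - ∑ s ∈ Finset.Icc 1 T, (s : ℝ) * π (s : ℕ∞))
      + (((T : ℝ) + 1) / T) * ((if a = ⊤ then (1 : ℝ) else 0) - π ⊤))
    (D : ℝ) (hD : D = ∑ t ∈ Finset.Icc 1 T, ∑ a ∈ 𝔸, π a * (g t a) ^ 2)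
    (hDpos : 0 < D)
    (γ : ℕ → ℕ∞ → ℝ) (hγ : ∀ t a, γ t a = π a * g t a / D)
    (Ybar : (Fin N → ℕ∞) → ℕ → ℕ∞ → ℝ)
    (hYbar : ∀ A t a, Ybar A t a
      = (1 / (Na a : ℝ)) * ∑ i ∈ Finset.univ.filter (fun i => A i = a), Y i t a)
    (τdid : (Fin N → ℕ∞) → ℝ)
    (hτdid : ∀ A, τdid A = ∑ t ∈ Finset.Icc 1 T, ∑ a ∈ 𝔸, γ t a * Ybar A t a)
    (τinf : ℕ → ℕ∞ → ℝ)
    (hτinf : ∀ t a, τinf t a = (1 / (N : ℝ)) * ∑ i, (Y i t a - Y i t ⊤)) :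
    (∑ A ∈ Ω, τdid A) / (Ω.card : ℝ)
      = ∑ t ∈ Finset.Icc 1 T, ∑ a ∈ 𝔸.filter (fun a => a ≤ (t : ℕ∞)), γ t a * τinf t a := by
  classical
  have hNR : (N : ℝ) ≠ 0 := Nat.cast_ne_zero.mpr hN.ne'
  have hTR : (T : ℝ) ≠ 0 := Nat.cast_ne_zero.mpr hT.ne'
  have htopnot : (⊤ : ℕ∞) ∉ (Finset.Icc 1 T).image (fun s : ℕ => (s : ℕ∞)) := by
    simp
  have hsplit : ∀ f : ℕ∞ → ℝ, ∑ a ∈ 𝔸, f a = f ⊤ + ∑ s ∈ Finset.Icc 1 T, f (s : ℕ∞) := by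
    intro f
    rw [h𝔸, Finset.sum_insert htopnot,
      Finset.sum_image (fun x _ y _ h => by exact_mod_cast h)]
  have hπ1 : ∑ a ∈ 𝔸, π a = 1 := by
    have h1 : ∑ a ∈ 𝔸, (Na a : ℝ) = (N : ℝ) := by rw [← Nat.cast_sum, hsum]
    simp only [hπ]
    rw [← Finset.sum_div, h1, div_self hNR]
  -- the weights sum to zero for every period
  have hπg0 : ∀ t ∈ Finset.Icc 1 T, ∑ a ∈ 𝔸, π a * g t a = 0 := by
    intro t ht
    obtain ⟨ht1, ht2⟩ := Finset.mem_Icc.mp ht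
    have S1 : ∑ a ∈ 𝔸, π a * (if a ≤ (t : ℕ∞) then (1 : ℝ) else 0)
        = ∑ s ∈ Finset.Icc 1 t, π (s : ℕ∞) := by
      rw [hsplit]
      have htop : ¬ ((⊤ : ℕ∞) ≤ (t : ℕ∞)) := by simp
      rw [if_neg htop, mul_zero, zero_add]
      have : ∀ s ∈ Finset.Icc 1 T, π (s : ℕ∞) * (if (s : ℕ∞) ≤ (t : ℕ∞) then (1:ℝ) else 0)
          = if s ≤ t then π (s : ℕ∞) else 0 := by
        intro s _
        by_cases h : s ≤ t
        · rw [if_pos (by exact_mod_cast h), if_pos h, mul_one]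
        · rw [if_neg (by exact_mod_cast h), if_neg h, mul_zero]
      rw [Finset.sum_congr rfl this, ← Finset.sum_filter]
      congr 1
      ext s
      simp only [Finset.mem_filter, Finset.mem_Icc]
      omega
    have S2 : ∑ a ∈ 𝔸, π a * (if a ≤ (T : ℕ∞) then (a.toNat : ℝ) else 0)
        = ∑ s ∈ Finset.Icc 1 T, (s : ℝ) * π (s : ℕ∞) := by
      rw [hsplit]
      have htop : ¬ ((⊤ : ℕ∞) ≤ (T : ℕ∞)) := by simp
      rw [if_neg htop, mul_zero, zero_add]
      refine Finset.sum_congr rfl fun s hs => ?_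
      obtain ⟨hs1, hs2⟩ := Finset.mem_Icc.mp hs
      rw [if_pos (by exact_mod_cast hs2)]
      simp [mul_comm]
    have S3 : ∑ a ∈ 𝔸, π a * (if a = ⊤ then (1 : ℝ) else 0) = π ⊤ := by
      rw [hsplit]
      have : ∀ s ∈ Finset.Icc 1 T, π (s : ℕ∞) * (if (s : ℕ∞) = ⊤ then (1:ℝ) else 0) = 0 := by
        intro s _
        rw [if_neg (by simp), mul_zero]
      rw [Finset.sum_congr rfl this]
      simp
    have expand : ∑ a ∈ 𝔸, π a * g t a
        = (∑ a ∈ 𝔸, π a * (if a ≤ (t : ℕ∞) then (1 : ℝ) else 0))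
          - (∑ a ∈ 𝔸, π a) * (∑ s ∈ Finset.Icc 1 t, π (s : ℕ∞))
        + (1 / (T : ℝ)) * ((∑ a ∈ 𝔸, π a * (if a ≤ (T : ℕ∞) then (a.toNat : ℝ) else 0))
          - (∑ a ∈ 𝔸, π a) * (∑ s ∈ Finset.Icc 1 T, (s : ℝ) * π (s : ℕ∞)))
        + (((T : ℝ) + 1) / T) * ((∑ a ∈ 𝔸, π a * (if a = ⊤ then (1 : ℝ) else 0))
          - (∑ a ∈ 𝔸, π a) * π ⊤) := by
      rw [Finset.sum_mul, Finset.sum_mul, Finset.sum_mul,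
        ← Finset.sum_sub_distrib, ← Finset.sum_sub_distrib, ← Finset.sum_sub_distrib,
        Finset.mul_sum, Finset.mul_sum, ← Finset.sum_add_distrib, ← Finset.sum_add_distrib]
      refine Finset.sum_congr rfl fun a _ => ?_
      rw [hg]
      ring
    rw [expand, S1, S2, S3, hπ1]
    ring
  have hγ0 : ∀ t ∈ Finset.Icc 1 T, ∑ a ∈ 𝔸, γ t a = 0 := by
    intro t ht
    simp only [hγ]
    rw [← Finset.sum_div, hπg0 t ht, zero_div]
  -- permutation invariance of Ω
  have hperm : ∀ A ∈ Ω, ∀ σ : Equiv.Perm (Fin N), (A ∘ σ) ∈ Ω := by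
    intro A hA σ
    rw [hΩ] at hA ⊢
    refine ⟨fun i => hA.1 _, fun a ha => ?_⟩
    rw [← hA.2 a ha]
    apply Finset.card_bij (fun k _ => σ k)
    · intro k hk
      simp only [Finset.mem_filter, Finset.mem_univ, true_and, Function.comp] at hk ⊢
      exact hk
    · intro k _ l _ h
      exact σ.injective h
    · intro m hm
      simp only [Finset.mem_filter, Finset.mem_univ, true_and, Function.comp] at hm ⊢
      exact ⟨σ.symm m, by simp [hm], by simp⟩
  -- symmetry of counts across units
  have hcsymm : ∀ (a : ℕ∞) (i j : Fin N),
      (Ω.filter (fun A => A i = a)).card = (Ω.filter (fun A => A j = a)).card := by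
    intro a i j
    apply Finset.card_bij (fun A _ => A ∘ Equiv.swap i j)
    · intro A hA
      simp only [Finset.mem_filter] at hA ⊢
      refine ⟨hperm A hA.1 _, ?_⟩
      simpa [Function.comp, Equiv.swap_apply_right] using hA.2
    · intro A _ B _ h
      funext k
      simpa [Function.comp, Equiv.swap_apply_self] using congrFun h (Equiv.swap i j k)
    · intro B hB
      simp only [Finset.mem_filter] at hB
      refine ⟨B ∘ Equiv.swap i j, ?_, ?_⟩
      · simp only [Finset.mem_filter]
        refine ⟨hperm B hB.1 _, ?_⟩
        simpa [Function.comp, Equiv.swap_apply_left] using hB.2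
      · funext k
        simp [Function.comp, Equiv.swap_apply_self]
  -- double counting
  have hdouble : ∀ a ∈ 𝔸,
      ∑ i : Fin N, (Ω.filter (fun A => A i = a)).card = Na a * Ω.card := by
    intro a ha
    calc ∑ i : Fin N, (Ω.filter fun A => A i = a).card
        = ∑ i : Fin N, ∑ A ∈ Ω, (if A i = a then 1 else 0) :=
          Finset.sum_congr rfl fun i _ => Finset.card_filter _ _
      _ = ∑ A ∈ Ω, ∑ i : Fin N, (if A i = a then 1 else 0) := Finset.sum_comm
      _ = ∑ _A ∈ Ω, Na a := by
          refine Finset.sum_congr rfl fun A hA => ?_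
          rw [← Finset.card_filter]
          exact ((hΩ A).mp hA).2 a ha
      _ = Na a * Ω.card := by rw [Finset.sum_const, smul_eq_mul, mul_comm]
  have hcount : ∀ a ∈ 𝔸, ∀ i : Fin N,
      N * (Ω.filter (fun A => A i = a)).card = Na a * Ω.card := by
    intro a ha i
    have h1 := hdouble a ha
    rw [Finset.sum_congr rfl (fun j _ => hcsymm a j i)] at h1
    rwa [Finset.sum_const, Finset.card_univ, Fintype.card_fin, smul_eq_mul] at h1
  -- Ω is nonempty
  have hΩne : Ω.Nonempty := by
    have hcard : Fintype.card (Σ a : 𝔸, Fin (Na a)) = Fintype.card (Fin N) := by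
      rw [Fintype.card_sigma, Fintype.card_fin]
      simp only [Fintype.card_fin]
      rw [← hsum]
      exact Finset.sum_attach 𝔸 (fun a => Na a)
    obtain ⟨e⟩ := Fintype.card_eq.mp hcard.symm
    refine ⟨fun i => ((e i).1 : ℕ∞), (hΩ _).mpr ⟨fun i => (e i).1.2, fun a ha => ?_⟩⟩
    calc (Finset.univ.filter (fun i : Fin N => ((e i).1 : ℕ∞) = a)).card
        = Fintype.card {i : Fin N // (e i).1 = (⟨a, ha⟩ : 𝔸)} := by
          rw [Fintype.card_subtype]
          congr 1
          ext i
          simp [Subtype.ext_iff]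
      _ = Fintype.card {x : Σ b : 𝔸, Fin (Na b) // x.1 = (⟨a, ha⟩ : 𝔸)} :=
          Fintype.card_congr (Equiv.subtypeEquiv e fun i => Iff.rfl)
      _ = Fintype.card (Fin (Na a)) :=
          Fintype.card_congr (stmtFiberEquiv (fun b : 𝔸 => Fin (Na b)) ⟨a, ha⟩)
      _ = Na a := Fintype.card_fin _
  have hΩcard : (Ω.card : ℝ) ≠ 0 :=
    Nat.cast_ne_zero.mpr (Finset.card_pos.mpr hΩne).ne'
  -- expectation of group means
  have hexp : ∀ t : ℕ, ∀ a ∈ 𝔸, ∑ A ∈ Ω, Ybar A t a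
      = (Ω.card : ℝ) * ((1 / (N : ℝ)) * ∑ i, Y i t a) := by
    intro t a ha
    have hNaR : (Na a : ℝ) ≠ 0 := Nat.cast_ne_zero.mpr (hNa a ha).ne'
    have hc : ∀ i : Fin N, ((Ω.filter fun A => A i = a).card : ℝ)
        = (Na a : ℝ) * (Ω.card : ℝ) / N := by
      intro i
      rw [eq_div_iff hNR]
      have h2 : (N : ℝ) * ((Ω.filter fun A => A i = a).card : ℝ)
          = (Na a : ℝ) * (Ω.card : ℝ) := by exact_mod_cast hcount a ha i
      linarith
    calc ∑ A ∈ Ω, Ybar A t a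
        = (1 / (Na a : ℝ)) * ∑ A ∈ Ω, ∑ i ∈ Finset.univ.filter (fun i => A i = a), Y i t a := by
          rw [Finset.mul_sum]
          exact Finset.sum_congr rfl fun A _ => hYbar A t a
      _ = (1 / (Na a : ℝ)) * ∑ A ∈ Ω, ∑ i : Fin N, (if A i = a then Y i t a else 0) := by
          congr 1
          exact Finset.sum_congr rfl fun A _ => Finset.sum_filter _ _
      _ = (1 / (Na a : ℝ)) * ∑ i : Fin N, ∑ A ∈ Ω, (if A i = a then Y i t a else 0) := by
          rw [Finset.sum_comm]
      _ = (1 / (Na a : ℝ)) * ∑ i : Fin N, ((Ω.filter fun A => A i = a).card : ℝ) * Y i t a := by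
          congr 1
          refine Finset.sum_congr rfl fun i _ => ?_
          rw [← Finset.sum_filter, Finset.sum_const, nsmul_eq_mul]
      _ = (1 / (Na a : ℝ)) * ∑ i : Fin N, ((Na a : ℝ) * (Ω.card : ℝ) / N) * Y i t a := by
          congr 1
          exact Finset.sum_congr rfl fun i _ => by rw [hc i]
      _ = (Ω.card : ℝ) * ((1 / (N : ℝ)) * ∑ i, Y i t a) := by
          rw [← Finset.mul_sum]
          field_simp
  -- τinf vanishes for not-yet-adopted dates
  have hτ0 : ∀ t ∈ Finset.Icc 1 T, ∀ a ∈ 𝔸, ¬ (a ≤ (t : ℕ∞)) → τinf t a = 0 := by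
    intro t ht a ha hle
    obtain ⟨ht1, ht2⟩ := Finset.mem_Icc.mp ht
    rw [hτinf]
    have : ∀ i, Y i t a = Y i t ⊤ := fun i => hna i t a ht1 ht2 ha (lt_of_not_ge hle)
    simp [this]
  -- main computation
  have hswap : ∑ A ∈ Ω, τdid A
      = ∑ t ∈ Finset.Icc 1 T, ∑ a ∈ 𝔸, γ t a * ∑ A ∈ Ω, Ybar A t a := by
    simp only [hτdid]
    rw [Finset.sum_comm]
    refine Finset.sum_congr rfl fun t _ => ?_
    rw [Finset.sum_comm]
    exact Finset.sum_congr rfl fun a _ => (Finset.mul_sum _ _ _).symm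
  rw [hswap]
  have step : ∀ t ∈ Finset.Icc 1 T,
      ∑ a ∈ 𝔸, γ t a * ∑ A ∈ Ω, Ybar A t a
        = (Ω.card : ℝ) * ∑ a ∈ 𝔸.filter (fun a => a ≤ (t : ℕ∞)), γ t a * τinf t a := by
    intro t ht
    calc ∑ a ∈ 𝔸, γ t a * ∑ A ∈ Ω, Ybar A t a
        = ∑ a ∈ 𝔸, γ t a * ((Ω.card : ℝ) * ((1 / (N : ℝ)) * ∑ i, Y i t a)) := by
          exact Finset.sum_congr rfl fun a ha => by rw [hexp t a ha]
      _ = (Ω.card : ℝ) * ∑ a ∈ 𝔸, γ t a * ((1 / (N : ℝ)) * ∑ i, Y i t a) := by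
          rw [Finset.mul_sum]
          exact Finset.sum_congr rfl fun a _ => by ring
      _ = (Ω.card : ℝ) * ∑ a ∈ 𝔸,
            (γ t a * τinf t a + γ t a * ((1 / (N : ℝ)) * ∑ i, Y i t ⊤)) := by
          congr 1
          refine Finset.sum_congr rfl fun a _ => ?_
          rw [hτinf]
          rw [Finset.sum_sub_distrib]
          ring
      _ = (Ω.card : ℝ) * ∑ a ∈ 𝔸, γ t a * τinf t a := by
          rw [Finset.sum_add_distrib, ← Finset.sum_mul, hγ0 t ht, zero_mul, add_zero]
      _ = (Ω.card : ℝ) * ∑ a ∈ 𝔸.filter (fun a => a ≤ (t : ℕ∞)), γ t a * τinf t a := by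
          congr 1
          have hz : ∑ a ∈ 𝔸.filter (fun a => ¬ a ≤ (t : ℕ∞)), γ t a * τinf t a = 0 := by
            refine Finset.sum_eq_zero fun a ha => ?_
            obtain ⟨ha', hna'⟩ := Finset.mem_filter.mp ha
            rw [hτ0 t ht a ha' hna', mul_zero]
          rw [← Finset.sum_filter_add_sum_filter_not 𝔸 (fun a => a ≤ (t : ℕ∞)), hz, add_zero]
  rw [Finset.sum_congr rfl step, ← Finset.mul_sum, mul_comm, mul_div_assoc,
    div_self hΩcard, mul_one]
end

section
/- Under completely random assignment, no anticipation, invariance to history, and constant treatment effect over time, E[τ̂_DID] = τ_{∞1} where τ_{∞1} = (1/N)Σ_i (Y_{i1}(1) − Y_{i1}(∞)). -/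
open Finset in
lemma aux_exists {α : Type*} [DecidableEq α] (N : ℕ) (𝔸 : Finset α) (Na : α → ℕ)
    (hsum : ∑ a ∈ 𝔸, Na a = N) :
    ∃ A : Fin N → α, (∀ i, A i ∈ 𝔸) ∧
      ∀ a ∈ 𝔸, (Finset.univ.filter (fun i => A i = a)).card = Na a := by
  have hcard : Fintype.card (Σ b : {b // b ∈ 𝔸}, Fin (Na b.1)) = Fintype.card (Fin N) := by
    simp only [Fintype.card_sigma, Fintype.card_fin]
    rw [Finset.sum_coe_sort 𝔸 Na, hsum]
  obtain ⟨e⟩ := Fintype.card_eq.mp hcard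
  refine ⟨fun i => ((e.symm i).1 : α), fun i => (e.symm i).1.2, fun a ha => ?_⟩
  have h1 : (Finset.univ.filter (fun i : Fin N => ((e.symm i).1 : α) = a)).card
      = Fintype.card {i : Fin N // ((e.symm i).1 : α) = a} := (Fintype.card_subtype _).symm
  rw [h1]
  have h2 : Fintype.card {i : Fin N // ((e.symm i).1 : α) = a}
      = Fintype.card {x : Σ b : {b // b ∈ 𝔸}, Fin (Na b.1) // (x.1 : α) = a} :=
    Fintype.card_congr (Equiv.subtypeEquiv e.symm (fun i => Iff.rfl))
  rw [h2, Fintype.card_subtype, ← Finset.univ_sigma_univ]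
  rw [Finset.card_filter, Finset.sum_sigma]
  have : ∀ b : {b // b ∈ 𝔸}, (∑ y ∈ (univ : Finset (Fin (Na b.1))),
      if ((⟨b, y⟩ : Σ b : {b // b ∈ 𝔸}, Fin (Na b.1)).1 : α) = a then 1 else 0)
      = if (b : α) = a then Na b.1 else 0 := by
    intro b; by_cases h : (b : α) = a <;> simp [h]
  rw [Finset.sum_congr rfl (fun b _ => this b),
    Finset.sum_coe_sort 𝔸 (fun b => if b = a then Na b else 0),
    Finset.sum_ite_eq' 𝔸 a Na, if_pos ha]

open Finset in
lemma aux_count {α : Type*} [DecidableEq α] {N : ℕ} (Ω : Finset (Fin N → α)) (a : α) (n : ℕ)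
    (hperm : ∀ (σ : Equiv.Perm (Fin N)), ∀ A ∈ Ω, (A ∘ σ) ∈ Ω)
    (hcount : ∀ A ∈ Ω, (Finset.univ.filter (fun i => A i = a)).card = n)
    (i : Fin N) :
    (Ω.filter (fun A => A i = a)).card * N = Ω.card * n := by
  have key : ∀ j : Fin N, (Ω.filter (fun A => A j = a)).card
      = (Ω.filter (fun A => A i = a)).card := by
    intro j
    apply Finset.card_bij (fun B _ => B ∘ Equiv.swap i j)
    · intro B hB
      rw [Finset.mem_filter] at hB ⊢
      exact ⟨hperm _ _ hB.1, by simpa [Equiv.swap_apply_left] using hB.2⟩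
    · intro B1 h1 B2 h2 h
      funext k
      have := congrFun h (Equiv.swap i j k)
      simpa [Function.comp, Equiv.swap_apply_self] using this
    · intro B hB
      rw [Finset.mem_filter] at hB
      refine ⟨B ∘ Equiv.swap i j, ?_, ?_⟩
      · rw [Finset.mem_filter]
        exact ⟨hperm _ _ hB.1, by simpa [Equiv.swap_apply_right] using hB.2⟩
      · funext k; simp [Function.comp, Equiv.swap_apply_self]
  calc (Ω.filter (fun A => A i = a)).card * N
      = ∑ j : Fin N, (Ω.filter (fun A => A j = a)).card := by
        rw [Finset.sum_congr rfl (fun j _ => key j)]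
        simp [mul_comm]
    _ = ∑ j : Fin N, ∑ A ∈ Ω, if A j = a then 1 else 0 := by
        simp only [Finset.card_filter]
    _ = ∑ A ∈ Ω, ∑ j : Fin N, if A j = a then 1 else 0 := Finset.sum_comm
    _ = ∑ A ∈ Ω, (Finset.univ.filter (fun j => A j = a)).card := by
        simp only [Finset.card_filter]
    _ = Ω.card * n := by
        rw [Finset.sum_congr rfl hcount]; simp [mul_comm]

open Finset in
theorem stmt13 (N T : ℕ) (hN : 0 < N) (hT : 0 < T)
    (𝔸 : Finset ℕ∞)
    (h𝔸 : 𝔸 = insert ⊤ ((Finset.Icc 1 T).image (fun s : ℕ => (s : ℕ∞))))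
    (Na : ℕ∞ → ℕ) (hNa : ∀ a ∈ 𝔸, 0 < Na a) (hsum : ∑ a ∈ 𝔸, Na a = N)
    (Ω : Finset (Fin N → ℕ∞))
    (hΩ : ∀ A : Fin N → ℕ∞, A ∈ Ω ↔ ((∀ i, A i ∈ 𝔸) ∧
      ∀ a ∈ 𝔸, (Finset.univ.filter (fun i => A i = a)).card = Na a))
    (Y : Fin N → ℕ → ℕ∞ → ℝ)
    (hna : ∀ i t a, 1 ≤ t → t ≤ T → a ∈ 𝔸 → (t : ℕ∞) < a → Y i t a = Y i t ⊤)
    (hinv : ∀ i t a, 1 ≤ t → t ≤ T → a ∈ 𝔸 → a ≤ (t : ℕ∞) → Y i t a = Y i t 1)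
    (htime : ∀ i t t', 1 ≤ t → t ≤ T → 1 ≤ t' → t' ≤ T →
      Y i t 1 - Y i t ⊤ = Y i t' 1 - Y i t' ⊤)
    (π : ℕ∞ → ℝ) (hπ : ∀ a, π a = (Na a : ℝ) / N)
    (g : ℕ → ℕ∞ → ℝ)
    (hg : ∀ t a, g t a =
      ((if a ≤ (t : ℕ∞) then (1 : ℝ) else 0) - ∑ s ∈ Finset.Icc 1 t, π (s : ℕ∞))
      + (1 / (T : ℝ)) * ((if a ≤ (T : ℕ∞) then (a.toNat : ℝ) else 0)
          - ∑ s ∈ Finset.Icc 1 T, (s : ℝ) * π (s : ℕ∞))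
      + (((T : ℝ) + 1) / T) * ((if a = ⊤ then (1 : ℝ) else 0) - π ⊤))
    (D : ℝ) (hD : D = ∑ t ∈ Finset.Icc 1 T, ∑ a ∈ 𝔸, π a * (g t a) ^ 2)
    (hDpos : 0 < D)
    (γ : ℕ → ℕ∞ → ℝ) (hγ : ∀ t a, γ t a = π a * g t a / D)
    (Ybar : (Fin N → ℕ∞) → ℕ → ℕ∞ → ℝ)
    (hYbar : ∀ A t a, Ybar A t a
      = (1 / (Na a : ℝ)) * ∑ i ∈ Finset.univ.filter (fun i => A i = a), Y i t a)
    (τdid : (Fin N → ℕ∞) → ℝ)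
    (hτdid : ∀ A, τdid A = ∑ t ∈ Finset.Icc 1 T, ∑ a ∈ 𝔸, γ t a * Ybar A t a) :
    (∑ A ∈ Ω, τdid A) / (Ω.card : ℝ)
      = (1 / (N : ℝ)) * ∑ i, (Y i 1 1 - Y i 1 ⊤) := by
  have hNne : (N:ℝ) ≠ 0 := Nat.cast_ne_zero.mpr hN.ne'
  have hTne : (T:ℝ) ≠ 0 := Nat.cast_ne_zero.mpr hT.ne'
  have htopnm : (⊤:ℕ∞) ∉ (Finset.Icc 1 T).image (fun s : ℕ => (s : ℕ∞)) := by
    simp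
  have sumA : ∀ f : ℕ∞ → ℝ, ∑ a ∈ 𝔸, f a = f ⊤ + ∑ s ∈ Finset.Icc 1 T, f (s:ℕ∞) := by
    intro f
    rw [h𝔸, Finset.sum_insert htopnm, Finset.sum_image]
    intro x _ y _ h
    exact_mod_cast (show (x:ℕ∞) = y from h)
  have hπtot : ∑ a ∈ 𝔸, π a = 1 := by
    simp only [hπ, ← Finset.sum_div]
    rw [show ∑ a ∈ 𝔸, (Na a : ℝ) = (N:ℝ) by exact_mod_cast congrArg Nat.cast hsum]
    exact div_self hNne
  have hfilt : ∀ t, t ≤ T →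
      (Finset.Icc 1 T).filter (fun s => s ≤ t) = Finset.Icc 1 t := by
    intro t h2; ext s; simp only [mem_filter, mem_Icc]; omega
  have A2 : ∀ t, t ≤ T →
      ∑ a ∈ 𝔸, π a * (if a ≤ (t:ℕ∞) then (1:ℝ) else 0) = ∑ s ∈ Finset.Icc 1 t, π s := by
    intro t h2
    rw [sumA]
    have h1 : (if (⊤:ℕ∞) ≤ (t:ℕ∞) then (1:ℝ) else 0) = 0 := by
      rw [if_neg]; simp
    rw [h1, mul_zero, zero_add]
    calc ∑ s ∈ Finset.Icc 1 T, π s * (if (s:ℕ∞) ≤ (t:ℕ∞) then (1:ℝ) else 0)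
        = ∑ s ∈ Finset.Icc 1 T, (if s ≤ t then π s else 0) := by
          apply Finset.sum_congr rfl; intro s _; by_cases h : s ≤ t
          · rw [if_pos h, if_pos (by exact_mod_cast h), mul_one]
          · rw [if_neg h, if_neg (by exact_mod_cast h), mul_zero]
      _ = ∑ s ∈ (Finset.Icc 1 T).filter (fun s => s ≤ t), π s := (Finset.sum_filter _ _).symm
      _ = ∑ s ∈ Finset.Icc 1 t, π s := by rw [hfilt t h2]
  have A3 : ∑ a ∈ 𝔸, π a * (if a ≤ (T:ℕ∞) then (a.toNat:ℝ) else 0)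
      = ∑ s ∈ Finset.Icc 1 T, (s:ℝ) * π s := by
    rw [sumA]
    have h1 : (if (⊤:ℕ∞) ≤ (T:ℕ∞) then ((⊤:ℕ∞).toNat:ℝ) else 0) = 0 := by
      rw [if_neg]; simp
    rw [h1, mul_zero, zero_add]
    apply Finset.sum_congr rfl; intro s hs
    rw [if_pos (by exact_mod_cast (Finset.mem_Icc.mp hs).2)]
    simp [mul_comm]
  have A4 : ∑ a ∈ 𝔸, π a * (if a = ⊤ then (1:ℝ) else 0) = π ⊤ := by
    rw [sumA, if_pos rfl, mul_one]
    rw [Finset.sum_congr rfl (fun s _ => by rw [if_neg (by simp), mul_zero])]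
    simp
  have L2 : ∀ t, t ≤ T → ∑ a ∈ 𝔸, π a * g t a = 0 := by
    intro t h2
    have expand : ∀ a, π a * g t a =
        π a * (if a ≤ (t:ℕ∞) then (1:ℝ) else 0)
        - (∑ s ∈ Finset.Icc 1 t, π s) * π a
        + (1/(T:ℝ)) * (π a * (if a ≤ (T:ℕ∞) then (a.toNat:ℝ) else 0))
        - ((1/(T:ℝ)) * (∑ s ∈ Finset.Icc 1 T, (s:ℝ) * π s)) * π a
        + (((T:ℝ)+1)/T) * (π a * (if a = ⊤ then (1:ℝ) else 0))
        - ((((T:ℝ)+1)/T) * π ⊤) * π a := by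
      intro a; rw [hg]; ring
    rw [Finset.sum_congr rfl (fun a _ => expand a)]
    simp only [Finset.sum_sub_distrib, Finset.sum_add_distrib, ← Finset.mul_sum,
      ← Finset.sum_mul]
    rw [hπtot, A2 t h2, A3, A4]
    ring
  have hπS : ∑ s ∈ Finset.Icc 1 T, π s = 1 - π ⊤ := by
    have := sumA π; rw [this] at hπtot; linarith
  have B2count : ∀ s, 1 ≤ s → s ≤ T →
      ∑ t ∈ Finset.Icc 1 T, (if (s:ℕ∞) ≤ (t:ℕ∞) then (1:ℝ) else 0) = (T:ℝ) + 1 - s := by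
    intro s h1 h2
    calc ∑ t ∈ Finset.Icc 1 T, (if (s:ℕ∞) ≤ (t:ℕ∞) then (1:ℝ) else 0)
        = ∑ t ∈ Finset.Icc 1 T, (if s ≤ t then (1:ℝ) else 0) := by
          apply Finset.sum_congr rfl; intro t _
          by_cases h : s ≤ t
          · rw [if_pos h, if_pos (by exact_mod_cast h)]
          · rw [if_neg h, if_neg (by exact_mod_cast h)]
      _ = ∑ t ∈ (Finset.Icc 1 T).filter (fun t => s ≤ t), (1:ℝ) :=
          (Finset.sum_filter _ _).symm
      _ = (((Finset.Icc 1 T).filter (fun t => s ≤ t)).card : ℝ) := by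
          rw [Finset.sum_const]; simp
      _ = ((Finset.Icc s T).card : ℝ) := by
          congr 1
          rw [show (Finset.Icc 1 T).filter (fun t => s ≤ t) = Finset.Icc s T by
            ext t; simp only [mem_filter, mem_Icc]; omega]
      _ = (T:ℝ) + 1 - s := by
          rw [Nat.card_Icc]
          rw [Nat.cast_sub (by omega)]
          push_cast; ring
  have hsumc : ∑ t ∈ Finset.Icc 1 T, ∑ s ∈ Finset.Icc 1 t, π s
      = ∑ s ∈ Finset.Icc 1 T, ((T:ℝ) + 1 - s) * π s := by
    have step : ∀ t ∈ Finset.Icc 1 T, ∑ s ∈ Finset.Icc 1 t, π s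
        = ∑ s ∈ Finset.Icc 1 T, (if (s:ℕ∞) ≤ (t:ℕ∞) then (1:ℝ) else 0) * π s := by
      intro t ht
      symm
      calc ∑ s ∈ Finset.Icc 1 T, (if (s:ℕ∞) ≤ (t:ℕ∞) then (1:ℝ) else 0) * π s
          = ∑ s ∈ Finset.Icc 1 T, (if s ≤ t then π s else 0) := by
            apply Finset.sum_congr rfl; intro s _
            by_cases h : s ≤ t
            · rw [if_pos h, if_pos (by exact_mod_cast h), one_mul]
            · rw [if_neg h, if_neg (by exact_mod_cast h), zero_mul]
        _ = ∑ s ∈ (Finset.Icc 1 T).filter (fun s => s ≤ t), π s := (Finset.sum_filter _ _).symm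
        _ = ∑ s ∈ Finset.Icc 1 t, π s := by rw [hfilt t (Finset.mem_Icc.mp ht).2]
    rw [Finset.sum_congr rfl step, Finset.sum_comm]
    apply Finset.sum_congr rfl; intro s hs
    rw [← Finset.sum_mul, B2count s (Finset.mem_Icc.mp hs).1 (Finset.mem_Icc.mp hs).2]
  have hexp : ∑ s ∈ Finset.Icc 1 T, ((T:ℝ) + 1 - s) * π s
      = ((T:ℝ)+1) * (1 - π ⊤) - ∑ s ∈ Finset.Icc 1 T, (s:ℝ) * π s := by
    have h : ∀ s ∈ Finset.Icc 1 T, ((T:ℝ) + 1 - s) * π s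
        = ((T:ℝ)+1) * π s - (s:ℝ) * π s := fun s _ => by ring
    rw [Finset.sum_congr rfl h, Finset.sum_sub_distrib, ← Finset.mul_sum, hπS]
  have cardS : ((Finset.Icc 1 T).card : ℝ) = T := by rw [Nat.card_Icc]; simp
  have L3 : ∀ a ∈ 𝔸, ∑ t ∈ Finset.Icc 1 T, g t a = 0 := by
    intro a ha
    rw [h𝔸, Finset.mem_insert] at ha
    rcases ha with ha | ha
    · subst ha
      have gform : ∀ t, g t ⊤ = -(∑ s ∈ Finset.Icc 1 t, π s)
          + ((1/(T:ℝ)) * (0 - ∑ s ∈ Finset.Icc 1 T, (s:ℝ) * π s)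
             + (((T:ℝ)+1)/T) * (1 - π ⊤)) := by
        intro t
        rw [hg]
        rw [if_neg (by simp), if_neg (by simp), if_pos rfl]
        ring
      rw [Finset.sum_congr rfl (fun t _ => gform t), Finset.sum_add_distrib,
        Finset.sum_neg_distrib, hsumc, hexp, Finset.sum_const, nsmul_eq_mul, cardS]
      field_simp
      ring
    · obtain ⟨s, hs, rfl⟩ := Finset.mem_image.mp ha
      obtain ⟨hs1, hs2⟩ := Finset.mem_Icc.mp hs
      have gform : ∀ t, g t (s:ℕ∞) = (if (s:ℕ∞) ≤ (t:ℕ∞) then (1:ℝ) else 0)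
          + (-(∑ s' ∈ Finset.Icc 1 t, π s')
          + ((1/(T:ℝ)) * ((s:ℝ) - ∑ s' ∈ Finset.Icc 1 T, (s':ℝ) * π s')
             + (((T:ℝ)+1)/T) * (0 - π ⊤))) := by
        intro t
        rw [hg]
        rw [if_pos (show (s:ℕ∞) ≤ (T:ℕ∞) by exact_mod_cast hs2),
          if_neg (show ¬((s:ℕ∞) = ⊤) by simp)]
        simp only [ENat.toNat_coe]
        ring
      rw [Finset.sum_congr rfl (fun t _ => gform t), Finset.sum_add_distrib,
        Finset.sum_add_distrib, Finset.sum_neg_distrib, hsumc, hexp,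
        B2count s hs1 hs2, Finset.sum_const, nsmul_eq_mul, cardS]
      field_simp
      ring
  have L4 : ∑ t ∈ Finset.Icc 1 T, ∑ a ∈ 𝔸,
      π a * g t a * (if a ≤ (t:ℕ∞) then (1:ℝ) else 0) = D := by
    have point : ∀ t a, π a * g t a * (if a ≤ (t:ℕ∞) then (1:ℝ) else 0)
        = π a * g t a ^ 2 + (∑ s ∈ Finset.Icc 1 t, π s) * (π a * g t a)
          - (π a * ((1/(T:ℝ)) * ((if a ≤ (T:ℕ∞) then (a.toNat:ℝ) else 0)
                - ∑ s ∈ Finset.Icc 1 T, (s:ℝ) * π s)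
             + (((T:ℝ)+1)/T) * ((if a = ⊤ then (1:ℝ) else 0) - π ⊤))) * g t a := by
      intro t a; rw [hg]; ring
    rw [Finset.sum_congr rfl (fun t _ => Finset.sum_congr rfl (fun a _ => point t a))]
    simp only [Finset.sum_add_distrib, Finset.sum_sub_distrib, ← Finset.mul_sum]
    have hz1 : ∑ t ∈ Finset.Icc 1 T, (∑ s ∈ Finset.Icc 1 t, π s)
        * (∑ a ∈ 𝔸, π a * g t a) = 0 := by
      rw [Finset.sum_congr rfl (fun t ht => by
        rw [L2 t (Finset.mem_Icc.mp ht).2, mul_zero])]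
      exact Finset.sum_const_zero
    have hz2 : ∑ t ∈ Finset.Icc 1 T, ∑ a ∈ 𝔸,
        (π a * ((1/(T:ℝ)) * ((if a ≤ (T:ℕ∞) then (a.toNat:ℝ) else 0)
              - ∑ s ∈ Finset.Icc 1 T, (s:ℝ) * π s)
           + (((T:ℝ)+1)/T) * ((if a = ⊤ then (1:ℝ) else 0) - π ⊤))) * g t a = 0 := by
      rw [Finset.sum_comm]
      rw [Finset.sum_congr rfl (fun a ha => by
        rw [← Finset.mul_sum, L3 a ha, mul_zero])]
      exact Finset.sum_const_zero
    rw [hz1, hz2, hD]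
    ring
  have hγ0 : ∀ t, t ≤ T → ∑ a ∈ 𝔸, γ t a = 0 := by
    intro t ht
    rw [Finset.sum_congr rfl (fun a _ => hγ t a), ← Finset.sum_div, L2 t ht, zero_div]
  have hγ1 : ∑ t ∈ Finset.Icc 1 T, ∑ a ∈ 𝔸,
      γ t a * (if a ≤ (t:ℕ∞) then (1:ℝ) else 0) = 1 := by
    have h : ∀ t a, γ t a * (if a ≤ (t:ℕ∞) then (1:ℝ) else 0)
        = π a * g t a * (if a ≤ (t:ℕ∞) then (1:ℝ) else 0) / D := by
      intro t a; rw [hγ]; ring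
    rw [Finset.sum_congr rfl (fun t _ => Finset.sum_congr rfl (fun a _ => h t a))]
    simp only [← Finset.sum_div]
    rw [L4, div_self hDpos.ne']
  -- probability part
  have hΩperm : ∀ (σ : Equiv.Perm (Fin N)), ∀ A ∈ Ω, (A ∘ σ) ∈ Ω := by
    intro σ A hA
    rw [hΩ] at hA ⊢
    refine ⟨fun i => hA.1 (σ i), fun a ha => ?_⟩
    have h : (Finset.univ.filter (fun i => (A ∘ σ) i = a)).card
        = (Finset.univ.filter (fun i => A i = a)).card := by
      rw [← Fintype.card_subtype, ← Fintype.card_subtype]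
      exact Fintype.card_congr (Equiv.subtypeEquiv σ (fun i => Iff.rfl))
    rw [h]; exact hA.2 a ha
  have hΩne : Ω.Nonempty := by
    obtain ⟨A, h1, h2⟩ := aux_exists N 𝔸 Na hsum
    exact ⟨A, (hΩ A).mpr ⟨h1, h2⟩⟩
  have hcne : (Ω.card : ℝ) ≠ 0 := by
    exact_mod_cast (Finset.card_pos.mpr hΩne).ne'
  have hkey : ∀ a ∈ 𝔸, ∀ i : Fin N,
      ((Ω.filter (fun A => A i = a)).card : ℝ) = (Ω.card:ℝ) * Na a / N := by
    intro a ha i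
    have h := aux_count Ω a (Na a) hΩperm (fun A hA => ((hΩ A).mp hA).2 a ha) i
    rw [eq_div_iff hNne]
    exact_mod_cast congrArg (Nat.cast (R := ℝ)) h
  have hEY : ∀ t, ∀ a ∈ 𝔸, ∑ A ∈ Ω, Ybar A t a
      = (Ω.card:ℝ)/N * ∑ i, Y i t a := by
    intro t a ha
    have hNane : (Na a : ℝ) ≠ 0 := Nat.cast_ne_zero.mpr (hNa a ha).ne'
    calc ∑ A ∈ Ω, Ybar A t a
        = ∑ A ∈ Ω, (1 / (Na a : ℝ)) * ∑ i ∈ Finset.univ.filter (fun i => A i = a), Y i t a :=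
          Finset.sum_congr rfl (fun A _ => hYbar A t a)
      _ = (1 / (Na a : ℝ)) * ∑ A ∈ Ω, ∑ i ∈ Finset.univ.filter (fun i => A i = a), Y i t a :=
          (Finset.mul_sum _ _ _).symm
      _ = (1 / (Na a : ℝ)) * ∑ A ∈ Ω, ∑ i : Fin N, (if A i = a then Y i t a else 0) := by
          rw [Finset.sum_congr rfl (fun A _ => Finset.sum_filter _ _)]
      _ = (1 / (Na a : ℝ)) * ∑ i : Fin N, ∑ A ∈ Ω, (if A i = a then Y i t a else 0) := by
          rw [Finset.sum_comm]
      _ = (1 / (Na a : ℝ)) * ∑ i : Fin N, ((Ω.card:ℝ) * Na a / N) * Y i t a := by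
          congr 1
          apply Finset.sum_congr rfl; intro i _
          rw [← Finset.sum_filter, Finset.sum_const, nsmul_eq_mul, hkey a ha i]
      _ = (Ω.card:ℝ)/N * ∑ i, Y i t a := by
          rw [← Finset.mul_sum]
          field_simp
  have hYform : ∀ (i : Fin N) t, 1 ≤ t → t ≤ T → ∀ a ∈ 𝔸,
      Y i t a = Y i t ⊤ + (if a ≤ (t:ℕ∞) then (1:ℝ) else 0) * (Y i 1 1 - Y i 1 ⊤) := by
    intro i t ht1 ht2 a ha
    by_cases h : a ≤ (t:ℕ∞)
    · rw [if_pos h, one_mul]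
      have h1 := hinv i t a ht1 ht2 ha h
      have h2 := htime i t 1 ht1 ht2 le_rfl hT
      linarith
    · rw [if_neg h, zero_mul, add_zero]
      exact hna i t a ht1 ht2 ha (not_le.mp h)
  have hsub : ∑ A ∈ Ω, τdid A = (Ω.card:ℝ)/N * ∑ i, (Y i 1 1 - Y i 1 ⊤) := by
    calc ∑ A ∈ Ω, τdid A
        = ∑ A ∈ Ω, ∑ t ∈ Finset.Icc 1 T, ∑ a ∈ 𝔸, γ t a * Ybar A t a :=
          Finset.sum_congr rfl (fun A _ => hτdid A)
      _ = ∑ t ∈ Finset.Icc 1 T, ∑ a ∈ 𝔸, ∑ A ∈ Ω, γ t a * Ybar A t a := by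
          rw [Finset.sum_comm]
          exact Finset.sum_congr rfl (fun t _ => Finset.sum_comm)
      _ = ∑ t ∈ Finset.Icc 1 T, ∑ a ∈ 𝔸, γ t a * ((Ω.card:ℝ)/N * ∑ i, Y i t a) := by
          apply Finset.sum_congr rfl; intro t _
          apply Finset.sum_congr rfl; intro a ha
          rw [← Finset.mul_sum, hEY t a ha]
      _ = ∑ t ∈ Finset.Icc 1 T, ∑ a ∈ 𝔸,
            (((Ω.card:ℝ)/N * ∑ i, Y i t ⊤) * γ t a
             + ((Ω.card:ℝ)/N * ∑ i, (Y i 1 1 - Y i 1 ⊤))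
               * (γ t a * (if a ≤ (t:ℕ∞) then (1:ℝ) else 0))) := by
          apply Finset.sum_congr rfl; intro t ht
          apply Finset.sum_congr rfl; intro a ha
          obtain ⟨ht1, ht2⟩ := Finset.mem_Icc.mp ht
          have : ∑ i, Y i t a = ∑ i, Y i t ⊤
              + (if a ≤ (t:ℕ∞) then (1:ℝ) else 0) * ∑ i, (Y i 1 1 - Y i 1 ⊤) := by
            rw [Finset.sum_congr rfl (fun i _ => hYform i t ht1 ht2 a ha),
              Finset.sum_add_distrib, ← Finset.mul_sum]
          rw [this]
          ring
      _ = ∑ t ∈ Finset.Icc 1 T, (((Ω.card:ℝ)/N * ∑ i, Y i t ⊤) * ∑ a ∈ 𝔸, γ t a)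
          + ((Ω.card:ℝ)/N * ∑ i, (Y i 1 1 - Y i 1 ⊤))
            * ∑ t ∈ Finset.Icc 1 T, ∑ a ∈ 𝔸, γ t a * (if a ≤ (t:ℕ∞) then (1:ℝ) else 0) := by
          simp only [Finset.sum_add_distrib, ← Finset.mul_sum]
      _ = (Ω.card:ℝ)/N * ∑ i, (Y i 1 1 - Y i 1 ⊤) := by
          rw [hγ1, mul_one]
          rw [Finset.sum_congr rfl (fun t ht => by
            rw [hγ0 t (Finset.mem_Icc.mp ht).2, mul_zero])]
          rw [Finset.sum_const_zero, zero_add]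
  rw [hsub]
  field_simp
end

section
/- Under uniform random partition of N units into groups of sizes N_a (a ∈ 𝔸), the covariance of the group averages Ȳ_a and Ȳ_{a'} for a ≠ a' equals −(1/(2N))(S_a² + S_{a'}² − S_{aa'}²) = (1/(2N))(S_a² + S_{a'}² − V_{aa'}²), where Ȳ_a = (1/N_a)Σ_{i:A_i=a} Y_i(a). -/
open Finset

section Helpers
set_option linter.unusedSectionVars false
set_option maxHeartbeats 800000

variable {α : Type*} [Fintype α] [DecidableEq α]

lemma comp_fiber_card' {N : ℕ} (A : Fin N → α) (σ : Equiv.Perm (Fin N)) (a : α) :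
    (univ.filter fun i => A (σ i) = a).card = (univ.filter fun i => A i = a).card := by
  apply Finset.card_bij (fun i _ => σ i)
  · intro i hi; simpa using (mem_filter.mp hi).2
  · intro i _ j _ h; exact σ.injective h
  · intro j hj
    exact ⟨σ.symm j, by simpa using (mem_filter.mp hj).2, by simp⟩

lemma perm_filter_card' {N : ℕ} (Na : α → ℕ)
    (Ω : Finset (Fin N → α))
    (hΩ : Ω = univ.filter fun A => ∀ a, (univ.filter fun i => A i = a).card = Na a)
    (σ : Equiv.Perm (Fin N)) (p : (Fin N → α) → Prop) [DecidablePred p] :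
    (Ω.filter fun A => p (A ∘ σ)).card = (Ω.filter fun A => p A).card := by
  have hmem : ∀ (τ : Equiv.Perm (Fin N)) (A : Fin N → α), A ∈ Ω → (A ∘ ⇑τ) ∈ Ω := by
    intro τ A hA
    subst hΩ
    simp only [mem_filter, mem_univ, true_and] at hA ⊢
    intro b
    rw [show (univ.filter fun i => (A ∘ ⇑τ) i = b) = univ.filter fun i => A (τ i) = b from rfl,
      comp_fiber_card']
    exact hA b
  apply Finset.card_bij' (fun A _ => A ∘ ⇑σ) (fun B _ => B ∘ ⇑σ.symm)
  · intro A hA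
    rw [mem_filter] at hA ⊢
    exact ⟨hmem σ A hA.1, hA.2⟩
  · intro B hB
    rw [mem_filter] at hB ⊢
    refine ⟨hmem σ.symm B hB.1, ?_⟩
    have : (B ∘ ⇑σ.symm) ∘ ⇑σ = B := by funext i; simp
    rw [this]; exact hB.2
  · intro A _; funext i; simp
  · intro B _; funext i; simp

lemma exists_perm_pair' {n : ℕ} (i j i' j' : Fin n) (hij : i ≠ j) (hij' : i' ≠ j') :
    ∃ σ : Equiv.Perm (Fin n), σ i = i' ∧ σ j = j' := by
  refine ⟨(Equiv.swap i i').trans (Equiv.swap (Equiv.swap i i' j) j'), ?_, ?_⟩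
  · have hk : i' ≠ Equiv.swap i i' j := by
      intro h
      apply hij
      exact (Equiv.swap i i').injective ((Equiv.swap_apply_left i i').trans h)
    rw [Equiv.trans_apply, Equiv.swap_apply_left]
    exact Equiv.swap_apply_of_ne_of_ne hk hij'
  · rw [Equiv.trans_apply, Equiv.swap_apply_left]

lemma count_one {N : ℕ} (Na : α → ℕ)
    (Ω : Finset (Fin N → α))
    (hΩ : Ω = univ.filter fun A => ∀ a, (univ.filter fun i => A i = a).card = Na a)
    (a : α) (i j : Fin N) :
    (Ω.filter fun A => A i = a).card = (Ω.filter fun A => A j = a).card := by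
  have := perm_filter_card' Na Ω hΩ (Equiv.swap i j) (fun A => A i = a)
  simpa [Function.comp, Equiv.swap_apply_left] using this.symm

lemma count_two {N : ℕ} (Na : α → ℕ)
    (Ω : Finset (Fin N → α))
    (hΩ : Ω = univ.filter fun A => ∀ a, (univ.filter fun i => A i = a).card = Na a)
    (a a' : α) {i j i' j' : Fin N} (hij : i ≠ j) (hij' : i' ≠ j') :
    (Ω.filter fun A => A i = a ∧ A j = a').card
      = (Ω.filter fun A => A i' = a ∧ A j' = a').card := by
  obtain ⟨σ, h1, h2⟩ := exists_perm_pair' i j i' j' hij hij'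
  have := perm_filter_card' Na Ω hΩ σ (fun A => A i = a ∧ A j = a')
  simpa [Function.comp, h1, h2] using this.symm

lemma count_one_val {N : ℕ} (Na : α → ℕ)
    (Ω : Finset (Fin N → α))
    (hΩ : Ω = univ.filter fun A => ∀ a, (univ.filter fun i => A i = a).card = Na a)
    (a : α) (i : Fin N) :
    (Ω.filter fun A => A i = a).card * N = Ω.card * Na a := by
  have hdc : ∑ j : Fin N, (Ω.filter fun A => A j = a).card = Ω.card * Na a := by
    have h1 : ∀ j : Fin N, (Ω.filter fun A => A j = a).card
        = ∑ A ∈ Ω, if A j = a then 1 else 0 := by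
      intro j; rw [Finset.card_filter]
    simp_rw [h1]
    rw [Finset.sum_comm]
    have h2 : ∀ A ∈ Ω, (∑ j : Fin N, if A j = a then 1 else 0) = Na a := by
      intro A hA
      rw [← Finset.card_filter]
      rw [hΩ] at hA
      simp only [mem_filter, mem_univ, true_and] at hA
      exact hA a
    rw [Finset.sum_congr rfl h2, Finset.sum_const, smul_eq_mul]
  have hconst : ∀ j : Fin N, (Ω.filter fun A => A j = a).card
      = (Ω.filter fun A => A i = a).card := fun j => count_one Na Ω hΩ a j i
  rw [Finset.sum_congr rfl (fun j _ => hconst j), Finset.sum_const, card_univ,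
    Fintype.card_fin, smul_eq_mul, mul_comm] at hdc
  exact hdc

lemma count_two_zero {N : ℕ}
    (Ω : Finset (Fin N → α)) (a a' : α) (hne : a ≠ a') (i : Fin N) :
    (Ω.filter fun A => A i = a ∧ A i = a').card = 0 := by
  rw [Finset.card_eq_zero, Finset.filter_eq_empty_iff]
  rintro A - ⟨h1, h2⟩
  exact hne (h1 ▸ h2)

lemma count_two_val {N : ℕ} (Na : α → ℕ)
    (Ω : Finset (Fin N → α))
    (hΩ : Ω = univ.filter fun A => ∀ a, (univ.filter fun i => A i = a).card = Na a)
    (a a' : α) (hne : a ≠ a') {i j : Fin N} (hij : i ≠ j) :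
    (Ω.filter fun A => A i = a ∧ A j = a').card * (N * (N - 1))
      = Ω.card * (Na a * Na a') := by
  set c2 := (Ω.filter fun A => A i = a ∧ A j = a').card with hc2
  have hdc : ∑ u : Fin N, ∑ v : Fin N, (Ω.filter fun A => A u = a ∧ A v = a').card
      = Ω.card * (Na a * Na a') := by
    have h1 : ∀ u v : Fin N, (Ω.filter fun A => A u = a ∧ A v = a').card
        = ∑ A ∈ Ω, if A u = a ∧ A v = a' then 1 else 0 := by
      intro u v; rw [Finset.card_filter]
    simp_rw [h1]
    rw [show (∑ u : Fin N, ∑ v : Fin N, ∑ A ∈ Ω, if A u = a ∧ A v = a' then 1 else 0)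
        = ∑ A ∈ Ω, ∑ u : Fin N, ∑ v : Fin N, (if A u = a ∧ A v = a' then 1 else 0) from
      (Finset.sum_congr rfl fun u _ => Finset.sum_comm).trans Finset.sum_comm]
    have h2 : ∀ A ∈ Ω, (∑ u : Fin N, ∑ v : Fin N, if A u = a ∧ A v = a' then 1 else 0)
        = Na a * Na a' := by
      intro A hA
      rw [hΩ] at hA
      simp only [mem_filter, mem_univ, true_and] at hA
      have : ∀ u v : Fin N, (if A u = a ∧ A v = a' then (1:ℕ) else 0)
          = (if A u = a then 1 else 0) * (if A v = a' then 1 else 0) := by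
        intro u v
        by_cases h : A u = a <;> by_cases h' : A v = a' <;> simp [h, h']
      rw [Finset.sum_congr rfl fun u (_ : u ∈ univ) =>
        Finset.sum_congr rfl fun v (_ : v ∈ univ) => this u v]
      rw [← Finset.sum_mul_sum]
      rw [← Finset.card_filter, ← Finset.card_filter, hA a, hA a']
    rw [Finset.sum_congr rfl h2, Finset.sum_const, smul_eq_mul]
  have hrow : ∀ u : Fin N, ∑ v : Fin N, (Ω.filter fun A => A u = a ∧ A v = a').card
      = (N - 1) * c2 := by
    intro u
    rw [← Finset.sum_erase_add _ _ (mem_univ u), count_two_zero Ω a a' hne u, add_zero]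
    have : ∀ v ∈ univ.erase u, (Ω.filter fun A => A u = a ∧ A v = a').card = c2 := by
      intro v hv
      exact count_two Na Ω hΩ a a' (Ne.symm (mem_erase.mp hv).1) hij
    rw [Finset.sum_congr rfl this, Finset.sum_const, card_erase_of_mem (mem_univ u),
      card_univ, Fintype.card_fin, smul_eq_mul]
  rw [Finset.sum_congr rfl (fun u _ => hrow u), Finset.sum_const, card_univ,
    Fintype.card_fin, smul_eq_mul] at hdc
  rw [← hdc]; ring


lemma omega_nonempty {N : ℕ} (Na : α → ℕ) (hsum : ∑ a, Na a = N)
    (Ω : Finset (Fin N → α))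
    (hΩ : Ω = univ.filter fun A => ∀ a, (univ.filter fun i => A i = a).card = Na a) :
    Ω.Nonempty := by
  have hcard : Fintype.card (Fin N) = Fintype.card (Σ b, Fin (Na b)) := by
    simp [Fintype.card_sigma, hsum]
  let e : Fin N ≃ Σ b, Fin (Na b) := Fintype.equivOfCardEq hcard
  refine ⟨fun i => (e i).1, ?_⟩
  rw [hΩ]; simp only [mem_filter, mem_univ, true_and]
  intro b
  have himg : univ.filter (fun i : Fin N => (e i).1 = b)
      = (univ.image fun k : Fin (Na b) => e.symm ⟨b, k⟩) := by
    ext i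
    simp only [mem_filter, mem_univ, true_and, mem_image]
    constructor
    · intro h
      refine ⟨h ▸ (e i).2, ?_⟩
      have hx : (⟨b, h ▸ (e i).2⟩ : Σ c, Fin (Na c)) = e i := by
        subst h; rfl
      rw [hx, Equiv.symm_apply_apply]
    · rintro ⟨k, rfl⟩
      simp [Equiv.apply_symm_apply]
  rw [himg, Finset.card_image_of_injective _ ?_]
  · simp
  · intro k k' h
    have := e.symm.injective h
    simpa using this





end Helpers

theorem stmt15 {α : Type*} [Fintype α] [DecidableEq α] (N : ℕ) (hN : 2 ≤ N)
    (Na : α → ℕ) (hNa : ∀ a, 0 < Na a) (hsum : ∑ a, Na a = N)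
    (Y : Fin N → α → ℝ)
    (Ω : Finset (Fin N → α))
    (hΩ : Ω = Finset.univ.filter
      (fun A => ∀ a, (Finset.univ.filter (fun i => A i = a)).card = Na a))
    (Ybar : (Fin N → α) → α → ℝ)
    (hYbar : ∀ A a, Ybar A a
      = (1 / (Na a : ℝ)) * ∑ i ∈ Finset.univ.filter (fun i => A i = a), Y i a)
    (E : ((Fin N → α) → ℝ) → ℝ)
    (hE : ∀ f, E f = (∑ A ∈ Ω, f A) / (Ω.card : ℝ))
    (Ypop : α → ℝ) (hYpop : ∀ a, Ypop a = (1 / (N : ℝ)) * ∑ i, Y i a)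
    (S2 : α → ℝ)
    (hS2 : ∀ a, S2 a = (1 / ((N : ℝ) - 1)) * ∑ i, (Y i a - Ypop a) ^ 2)
    (Sd2 : α → α → ℝ)
    (hSd2 : ∀ a a', Sd2 a a'
      = (1 / ((N : ℝ) - 1)) * ∑ i, ((Y i a' - Ypop a') - (Y i a - Ypop a)) ^ 2)
    (V2 : α → α → ℝ)
    (hV2 : ∀ a a', V2 a a'
      = (1 / ((N : ℝ) - 1)) * ∑ i, ((Y i a - Ypop a) + (Y i a' - Ypop a')) ^ 2)
    (Cov : ((Fin N → α) → ℝ) → ((Fin N → α) → ℝ) → ℝ)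
    (hCov : ∀ f h, Cov f h = E (fun A => (f A - E f) * (h A - E h)))
    (a a' : α) (hne : a ≠ a') :
    Cov (fun A => Ybar A a) (fun A => Ybar A a')
        = -(1 / (2 * (N : ℝ))) * (S2 a + S2 a' - Sd2 a a') ∧
    Cov (fun A => Ybar A a) (fun A => Ybar A a')
        = (1 / (2 * (N : ℝ))) * (S2 a + S2 a' - V2 a a') := by
  have hΩne : Ω.Nonempty := omega_nonempty Na hsum Ω hΩ
  have hK : (Ω.card : ℝ) ≠ 0 := Nat.cast_ne_zero.mpr (Finset.card_ne_zero.mpr hΩne)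
  have hN0 : (N : ℝ) ≠ 0 := Nat.cast_ne_zero.mpr (by omega)
  have hN2 : (2 : ℝ) ≤ (N : ℝ) := by exact_mod_cast hN
  have hN1 : (N : ℝ) - 1 ≠ 0 := by intro h; linarith
  have hNaa : (Na a : ℝ) ≠ 0 := Nat.cast_ne_zero.mpr (hNa a).ne'
  have hNaa' : (Na a' : ℝ) ≠ 0 := Nat.cast_ne_zero.mpr (hNa a').ne'
  set K := (Ω.card : ℝ) with hKdef
  set Ta := ∑ i, Y i a with hTa
  set Ta' := ∑ i, Y i a' with hTa'
  set Pr := ∑ i, Y i a * Y i a' with hPr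
  -- swap sum lemma
  have hswap : ∀ (b : α) (g : Fin N → ℝ),
      ∑ A ∈ Ω, ∑ i ∈ univ.filter (fun i => A i = b), g i
        = ∑ i : Fin N, ((Ω.filter fun A => A i = b).card : ℝ) * g i := by
    intro b g
    simp_rw [Finset.sum_filter]
    rw [Finset.sum_comm]
    refine Finset.sum_congr rfl fun i _ => ?_
    rw [← Finset.sum_filter, Finset.sum_const, nsmul_eq_mul]
  -- single counts
  have hc1 : ∀ (b : α) (i : Fin N), ((Ω.filter fun A => A i = b).card : ℝ)
      = K * (Na b) / N := by
    intro b i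
    have h := count_one_val Na Ω hΩ b i
    rw [eq_div_iff hN0, hKdef]
    exact_mod_cast h
  -- E of Ybar
  have hEbar : ∀ b : α, (Na b : ℝ) ≠ 0 → E (fun A => Ybar A b) = Ypop b := by
    intro b hb
    rw [hE]
    have hs : ∑ A ∈ Ω, Ybar A b = K * Ypop b := by
      simp_rw [hYbar]
      rw [← Finset.mul_sum, hswap b (fun i => Y i b)]
      rw [Finset.sum_congr rfl fun i (_ : i ∈ univ) => by rw [hc1 b i]]
      rw [← Finset.mul_sum, hYpop]
      field_simp
    rw [hs, mul_comm, mul_div_assoc, div_self hK, mul_one]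
  have hsb : ∀ b : α, (Na b : ℝ) ≠ 0 → ∑ A ∈ Ω, Ybar A b = K * Ypop b := by
    intro b hb
    have h := hEbar b hb
    rw [hE] at h
    rw [div_eq_iff hK] at h
    rw [h, mul_comm]
  -- pair count cast
  have hc2cast : ∀ {i j : Fin N}, i ≠ j →
      ((Ω.filter fun A => A i = a ∧ A j = a').card : ℝ)
        = K * ((Na a : ℝ) * (Na a' : ℝ)) / ((N : ℝ) * ((N : ℝ) - 1)) := by
    intro i j hij2
    have h := count_two_val Na Ω hΩ a a' hne hij2
    rw [eq_div_iff (mul_ne_zero hN0 hN1)]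
    have hcast : ((N : ℝ) * ((N : ℝ) - 1)) = ((N * (N - 1) : ℕ) : ℝ) := by
      have h1 : 1 ≤ N := le_trans (by norm_num) hN
      rw [Nat.cast_mul, Nat.cast_sub h1, Nat.cast_one]
    rw [hcast, hKdef]
    exact_mod_cast h
  -- second moment
  have hE2 : E (fun A => Ybar A a * Ybar A a')
      = (Ta * Ta' - Pr) / ((N : ℝ) * ((N : ℝ) - 1)) := by
    rw [hE]
    have hs : ∑ A ∈ Ω, Ybar A a * Ybar A a'
        = K * ((Ta * Ta' - Pr) / ((N : ℝ) * ((N : ℝ) - 1))) := by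
      simp_rw [hYbar]
      have e1 : ∀ A : Fin N → α,
          ((1 / (Na a : ℝ)) * ∑ i ∈ univ.filter (fun i => A i = a), Y i a) *
            ((1 / (Na a' : ℝ)) * ∑ i ∈ univ.filter (fun i => A i = a'), Y i a')
          = (1 / ((Na a : ℝ) * (Na a' : ℝ))) *
            ((∑ i ∈ univ.filter (fun i => A i = a), Y i a) *
              ∑ i ∈ univ.filter (fun i => A i = a'), Y i a') := by
        intro A; field_simp
      have e2 : ∀ A : Fin N → α,
          (∑ i ∈ univ.filter (fun i => A i = a), Y i a) *
            (∑ j ∈ univ.filter (fun j => A j = a'), Y j a')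
          = ∑ i : Fin N, ∑ j : Fin N,
              (if A i = a ∧ A j = a' then Y i a * Y j a' else 0) := by
        intro A
        rw [Finset.sum_mul_sum, Finset.sum_filter]
        refine Finset.sum_congr rfl fun i _ => ?_
        by_cases h : A i = a
        · rw [if_pos h, Finset.sum_filter]
          refine Finset.sum_congr rfl fun j _ => ?_
          by_cases h' : A j = a' <;> simp [h, h']
        · rw [if_neg h]
          symm
          refine Finset.sum_eq_zero fun j _ => ?_
          simp [h]
      simp_rw [e1, e2, ← Finset.mul_sum]
      have key2 : ∑ A ∈ Ω, ∑ i : Fin N, ∑ j : Fin N,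
            (if A i = a ∧ A j = a' then Y i a * Y j a' else 0)
          = ∑ i : Fin N, ∑ j : Fin N,
              ((Ω.filter fun A => A i = a ∧ A j = a').card : ℝ) * (Y i a * Y j a') := by
        rw [Finset.sum_comm]
        refine Finset.sum_congr rfl fun i _ => ?_
        rw [Finset.sum_comm]
        refine Finset.sum_congr rfl fun j _ => ?_
        rw [← Finset.sum_filter, Finset.sum_const, nsmul_eq_mul]
      rw [key2]
      set C := K * ((Na a : ℝ) * (Na a' : ℝ)) / ((N : ℝ) * ((N : ℝ) - 1)) with hC
      have hcards : ∀ i j : Fin N,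
          ((Ω.filter fun A => A i = a ∧ A j = a').card : ℝ) * (Y i a * Y j a')
            = C * (Y i a * Y j a') - (if i = j then C * (Y i a * Y i a') else 0) := by
        intro i j
        by_cases h : i = j
        · subst h
          rw [count_two_zero Ω a a' hne i, if_pos rfl]
          push_cast
          ring
        · rw [hc2cast h, if_neg h, sub_zero, hC]
      rw [Finset.sum_congr rfl fun i (_ : i ∈ univ) =>
        Finset.sum_congr rfl fun j (_ : j ∈ univ) => hcards i j]
      simp_rw [Finset.sum_sub_distrib, Finset.sum_ite_eq, mem_univ, if_true]
      have r1 : (∑ i : Fin N, ∑ j : Fin N, C * (Y i a * Y j a')) = C * (Ta * Ta') := by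
        simp_rw [← Finset.mul_sum]
        rw [← Finset.sum_mul, hTa, hTa']
      have r2 : (∑ i : Fin N, C * (Y i a * Y i a')) = C * Pr := by
        rw [← Finset.mul_sum, hPr]
      rw [r1, r2, hC]
      field_simp
    rw [hs, mul_comm, mul_div_assoc, div_self hK, mul_one]
  -- Cov decomposition
  have hcov : Cov (fun A => Ybar A a) (fun A => Ybar A a')
      = E (fun A => Ybar A a * Ybar A a') - Ypop a * Ypop a' := by
    rw [hCov, hEbar a hNaa, hEbar a' hNaa', hE, hE]
    have expand : ∑ A ∈ Ω, (Ybar A a - Ypop a) * (Ybar A a' - Ypop a')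
        = ∑ A ∈ Ω, Ybar A a * Ybar A a' - Ypop a * ∑ A ∈ Ω, Ybar A a'
          - Ypop a' * ∑ A ∈ Ω, Ybar A a + K * (Ypop a * Ypop a') := by
      rw [Finset.sum_congr rfl fun A (_ : A ∈ Ω) => (by ring :
        (Ybar A a - Ypop a) * (Ybar A a' - Ypop a')
          = (Ybar A a * Ybar A a' - Ypop a * Ybar A a' - Ypop a' * Ybar A a)
            + Ypop a * Ypop a')]
      rw [Finset.sum_add_distrib, Finset.sum_sub_distrib, Finset.sum_sub_distrib,
        ← Finset.mul_sum, ← Finset.mul_sum, Finset.sum_const, nsmul_eq_mul]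
    rw [expand, hsb a hNaa, hsb a' hNaa']
    field_simp
    ring
  -- sum identities
  have hSsum : S2 a + S2 a' - Sd2 a a'
      = (2 / ((N : ℝ) - 1)) * (Pr - Ta * Ta' / (N : ℝ)) := by
    rw [hS2 a, hS2 a', hSd2 a a']
    rw [← mul_add, ← mul_sub, ← Finset.sum_add_distrib, ← Finset.sum_sub_distrib]
    rw [Finset.sum_congr rfl fun i (_ : i ∈ univ) => (by ring :
      (Y i a - Ypop a) ^ 2 + (Y i a' - Ypop a') ^ 2
          - ((Y i a' - Ypop a') - (Y i a - Ypop a)) ^ 2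
        = 2 * (Y i a * Y i a') - (2 * Ypop a) * Y i a' - (2 * Ypop a') * Y i a
          + 2 * (Ypop a * Ypop a'))]
    rw [Finset.sum_add_distrib, Finset.sum_sub_distrib, Finset.sum_sub_distrib,
      ← Finset.mul_sum, ← Finset.mul_sum, ← Finset.mul_sum, Finset.sum_const,
      nsmul_eq_mul, card_univ, Fintype.card_fin]
    rw [← hPr, ← hTa, ← hTa', hYpop, hYpop, ← hTa, ← hTa']
    field_simp
    ring
  have hVd : Sd2 a a' + V2 a a' = 2 * (S2 a + S2 a') := by
    rw [hSd2, hV2, hS2, hS2]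
    rw [← mul_add, ← mul_add, ← Finset.sum_add_distrib, ← Finset.sum_add_distrib]
    rw [Finset.sum_congr rfl fun i (_ : i ∈ univ) => (by ring :
      ((Y i a' - Ypop a') - (Y i a - Ypop a)) ^ 2
          + ((Y i a - Ypop a) + (Y i a' - Ypop a')) ^ 2
        = 2 * ((Y i a - Ypop a) ^ 2 + (Y i a' - Ypop a') ^ 2))]
    rw [← Finset.mul_sum]
    ring
  have main : Cov (fun A => Ybar A a) (fun A => Ybar A a')
      = -(1 / (2 * (N : ℝ))) * (S2 a + S2 a' - Sd2 a a') := by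
    rw [hcov, hE2, hSsum, hYpop, hYpop, ← hTa, ← hTa']
    field_simp
    ring
  refine ⟨main, ?_⟩
  have hflip : S2 a + S2 a' - V2 a a' = -(S2 a + S2 a' - Sd2 a a') := by linarith
  rw [hflip, main]
  ring
end
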